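/- arXiv:1608.08918 — 3 statements merged into one kernel-verified Lean document; each statement's English description precedes it below -/
import Mathlib

section
/- If f : ℕ → ℕ is an order and h = Inv_f, then for all i ≥ 1, Inv_h(i) = f(i-1) + 1. -/
/-- The inverse of an unbounded function: `invOrd f n` is the least `k` with `f k ≥ n`. -/
noncomputable def invOrd (f : ℕ → ℕ) (n : ℕ) : ℕ := sInf {k | n ≤ f k}

/-- If `f` is an order (nondecreasing and unbounded) and `h = invOrd f`, then for all
`i ≥ 1`, `invOrd h i = f (i-1) + 1`. -/
theorem stmt1 (f : ℕ → ℕ) (hmono : Monotone f) (hunb : ∀ m, ∃ k, m ≤ f k)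
    (h : ℕ → ℕ) (hh : h = invOrd f) :
    ∀ i, 1 ≤ i → invOrd h i = f (i - 1) + 1 := by
  intro i hi
  subst hh
  have key1 : i ≤ invOrd f (f (i - 1) + 1) := by
    have hne : {k | f (i - 1) + 1 ≤ f k}.Nonempty := hunb _
    have hmem : f (i - 1) + 1 ≤ f (invOrd f (f (i - 1) + 1)) := Nat.sInf_mem hne
    by_contra hlt
    push_neg at hlt
    have h2 : invOrd f (f (i - 1) + 1) ≤ i - 1 := by omega
    have h3 := hmono h2
    omega
  have key2 : ∀ k, k ≤ f (i - 1) → invOrd f k < i := by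
    intro k hk
    have : invOrd f k ≤ i - 1 := Nat.sInf_le hk
    omega
  rw [show invOrd (invOrd f) i = sInf {k | i ≤ invOrd f k} from rfl]
  apply le_antisymm
  · exact Nat.sInf_le key1
  · have hmem : i ≤ invOrd f (sInf {k | i ≤ invOrd f k}) :=
      Nat.sInf_mem (⟨_, key1⟩ : {k | i ≤ invOrd f k}.Nonempty)
    by_contra hlt
    push_neg at hlt
    have h4 := key2 (sInf {k | i ≤ invOrd f k}) (by omega)
    omega
end

section
/- Let d be a martingale, f : ℕ → ℕ strictly increasing, n₀ ∈ ℕ, and ξ ∈ {0,1}^ℕ with d(ξ↾f(n)) ≥ 2^{2n+1} for all n ≥ n₀. Define the 'savings account' martingale δ by: δ(x) = d(x) for |x| ≤ f(n₀); and for |x| ≥ f(n₀) with f(n) ≤ |x| < f(n+1) (n ≥ n₀), δ(xi) = δ(x↾f(n))/2 + (δ(x) − δ(x↾f(n))/2)·d(xi)/d(x) for i ∈ {0,1} (assuming d(x) > 0 along ξ where needed). Then δ is a martingale and for every m with f(n) ≤ m < f(n+1), n ≥ n₀: δ(ξ↾m) ≥ 2^{n}. -/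
open MeasureTheory

/-- The basic cylinder `[x]` of infinite binary sequences extending the finite string `x`. -/
def Cyl (x : List Bool) : Set (ℕ → Bool) := {α | ∀ i : Fin x.length, α i = x.get i}

/-- The open set `[X]` generated by a set of finite strings. -/
def OpenGen (X : Set (List Bool)) : Set (ℕ → Bool) := ⋃ x ∈ X, Cyl x

/-- The length-`n` initial segment of an infinite binary sequence, as a finite string. -/
def seg (ξ : ℕ → Bool) (n : ℕ) : List Bool := (List.range n).map ξ

/-- `μ` is the uniform (fair-coin) measure on Cantor space: every cylinder `[x]`
has measure `2^{-|x|}`. -/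
def UniformOn (μ : Measure (ℕ → Bool)) : Prop :=
  ∀ x : List Bool, μ (Cyl x) = (2 : ENNReal)⁻¹ ^ x.length

/-!
At the start `f n` of each stage `n ≥ n₀` the strategy `δ` puts half of its capital into a
savings account and bets the other half as `d` does. Inside stage `n` this gives the closed form
`δ x = δ(x↾f n)/2 + δ(x↾f n)/2 · d x / d(x↾f n)`, so `δ` never falls below half of its capital at
the start of the stage, and over a whole stage it at least follows `d`, at half the stake. Hence
`δ(ξ↾f n) ≥ d(ξ↾f n) / 2^n ≥ 2^{n+1}`, and `δ(ξ↾m) ≥ 2^n` throughout stage `n`.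
-/

lemma seg_length (ξ : ℕ → Bool) (n : ℕ) : (seg ξ n).length = n := by simp [seg]

lemma take_seg (ξ : ℕ → Bool) {k m : ℕ} (h : k ≤ m) : (seg ξ m).take k = seg ξ k := by
  simp [seg, ← List.map_take, List.take_range, h]

lemma StrictMono.exists_le_lt_succ {f : ℕ → ℕ} (hf : StrictMono f) {n₀ m : ℕ}
    (hm : f n₀ ≤ m) : ∃ n, n₀ ≤ n ∧ f n ≤ m ∧ m < f (n + 1) := by
  induction m, hm using Nat.le_induction with
  | base => exact ⟨n₀, le_rfl, le_rfl, hf (Nat.lt_succ_self n₀)⟩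
  | succ m _ ih =>
    obtain ⟨n, hn, hnm, hmn⟩ := ih
    rcases (Nat.succ_le_of_lt hmn).lt_or_eq with hlt | heq
    · exact ⟨n, hn, hnm.trans m.le_succ, hlt⟩
    · exact ⟨n + 1, hn.trans n.le_succ, heq.ge, heq.trans_lt (hf (Nat.lt_succ_self (n + 1)))⟩

structure IsSavingsAccount (d δ : List Bool → ℝ) (f : ℕ → ℕ) (n₀ : ℕ) : Prop where
  eq_of_length_le : ∀ x : List Bool, x.length ≤ f n₀ → δ x = d x
  append_singleton : ∀ (x : List Bool) (n : ℕ), n₀ ≤ n → f n ≤ x.length → x.length < f (n + 1) →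
    ∀ i : Bool, δ (x ++ [i]) =
      δ (x.take (f n)) / 2 + (δ x - δ (x.take (f n)) / 2) * d (x ++ [i]) / d x

namespace IsSavingsAccount

variable {d δ : List Bool → ℝ} {f : ℕ → ℕ} {n₀ n : ℕ} {x : List Bool}

theorem eq_half_add_half_mul (hδ : IsSavingsAccount d δ f n₀) (hd : ∀ x, d x ≠ 0)
    (hn : n₀ ≤ n) (hx : f n ≤ x.length) (hx' : x.length ≤ f (n + 1)) :
    δ x = δ (x.take (f n)) / 2 + δ (x.take (f n)) / 2 * (d x / d (x.take (f n))) := by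
  induction x using List.reverseRecOn with
  | nil =>
    rw [List.take_nil, div_self (hd [])]
    ring
  | append_singleton y b ih =>
    rw [List.length_append, List.length_singleton] at hx hx'
    rcases hx.eq_or_lt with heq | hlt
    · rw [List.take_of_length_le (by simp [heq]), div_self (hd _)]
      ring
    · have hy : f n ≤ y.length := Nat.le_of_lt_succ hlt
      rw [List.take_append_of_le_length hy, hδ.append_singleton y n hn hy (by omega) b,
        ih hy (by omega)]
      have := hd y
      have := hd (y.take (f n))
      field_simp
      ring

theorem nonneg (hδ : IsSavingsAccount d δ f n₀) (hd : ∀ x, 0 < d x) (hf : StrictMono f) :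
    0 ≤ δ x := by
  suffices h : ∀ n, n₀ ≤ n → ∀ x : List Bool, x.length ≤ f n → 0 ≤ δ x from
    h (max n₀ x.length) (le_max_left _ _) x ((le_max_right _ _).trans (hf.id_le _))
  intro n hn
  induction n, hn using Nat.le_induction with
  | base => exact fun x hx => (hδ.eq_of_length_le x hx).symm ▸ (hd x).le
  | succ n hn ih =>
    intro x hx
    rcases le_or_gt x.length (f n) with hxn | hxn
    · exact ih x hxn
    · have ht := ih (x.take (f n)) (by simp)
      rw [hδ.eq_half_add_half_mul (fun x => (hd x).ne') hn hxn.le hx]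
      have := hd x
      have := hd (x.take (f n))
      positivity

theorem half_le (hδ : IsSavingsAccount d δ f n₀) (hd : ∀ x, 0 < d x) (hf : StrictMono f)
    (hn : n₀ ≤ n) (hx : f n ≤ x.length) (hx' : x.length ≤ f (n + 1)) :
    δ (x.take (f n)) / 2 ≤ δ x := by
  rw [hδ.eq_half_add_half_mul (fun x => (hd x).ne') hn hx hx']
  have := hδ.nonneg hd hf (x := x.take (f n))
  have := hd x
  have := hd (x.take (f n))
  exact le_add_of_nonneg_right (by positivity)

theorem div_two_pow_le (hδ : IsSavingsAccount d δ f n₀) (hd : ∀ x, 0 < d x)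
    (hf : StrictMono f) (hn : n₀ ≤ n) (hx : x.length = f n) : d x / 2 ^ n ≤ δ x := by
  induction n, hn using Nat.le_induction generalizing x with
  | base =>
    rw [hδ.eq_of_length_le x hx.le]
    exact div_le_self (hd x).le (one_le_pow₀ one_le_two)
  | succ n hn ih =>
    have hfn : f n ≤ x.length := hx ▸ (hf n.lt_succ_self).le
    have hstart := ih (x := x.take (f n)) (by simp [hfn])
    have hpos := hd (x.take (f n))
    calc d x / 2 ^ (n + 1)
        = d (x.take (f n)) / 2 ^ n / 2 * (d x / d (x.take (f n))) := by
          field_simp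
          ring
      _ ≤ δ (x.take (f n)) / 2 * (d x / d (x.take (f n))) := by
          have := hd x
          gcongr
      _ ≤ δ x := by
          rw [hδ.eq_half_add_half_mul (fun x => (hd x).ne') hn hfn hx.le]
          exact le_add_of_nonneg_left (by have := hδ.nonneg hd hf (x := x.take (f n)); positivity)

theorem martingale (hδ : IsSavingsAccount d δ f n₀)
    (hmart : ∀ x, d (x ++ [false]) + d (x ++ [true]) = 2 * d x) (hd : ∀ x, d x ≠ 0)
    (hf : StrictMono f) (x : List Bool) :
    δ (x ++ [false]) + δ (x ++ [true]) = 2 * δ x := by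
  rcases lt_or_ge x.length (f n₀) with hx | hx
  · have hx1 : ∀ i, (x ++ [i]).length ≤ f n₀ := fun i => by simpa using hx
    rw [hδ.eq_of_length_le _ (hx1 false), hδ.eq_of_length_le _ (hx1 true),
      hδ.eq_of_length_le x hx.le, hmart]
  · obtain ⟨n, hn, hnx, hxn⟩ := hf.exists_le_lt_succ hx
    rw [hδ.append_singleton x n hn hnx hxn, hδ.append_singleton x n hn hnx hxn]
    have := hd x
    field_simp
    linear_combination (2 * δ x - δ (x.take (f n))) * hmart x

end IsSavingsAccount

/-- Savings-account construction. Given a martingale `d` which is positive (as needed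
for the defining recursion of `δ`), a strictly increasing `f`, and `ξ` with
`d(ξ↾f(n)) ≥ 2^{2n+1}` for `n ≥ n₀`, the function `δ` defined by `δ(x) = d(x)` for
`|x| ≤ f(n₀)` and, for `f(n) ≤ |x| < f(n+1)` with `n ≥ n₀`,
`δ(xi) = δ(x↾f(n))/2 + (δ(x) − δ(x↾f(n))/2)·d(xi)/d(x)`, is a martingale satisfying
`δ(ξ↾m) ≥ 2^n` whenever `f(n) ≤ m < f(n+1)` and `n ≥ n₀`. -/
theorem stmt16 (d δ : List Bool → ℝ)
    (hpos : ∀ x, 0 < d x)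
    (hmart : ∀ x, d (x ++ [false]) + d (x ++ [true]) = 2 * d x)
    (f : ℕ → ℕ) (hf : StrictMono f) (n₀ : ℕ) (ξ : ℕ → Bool)
    (hξ : ∀ n, n₀ ≤ n → (2 : ℝ) ^ (2 * n + 1) ≤ d (seg ξ (f n)))
    (hδ0 : ∀ x : List Bool, x.length ≤ f n₀ → δ x = d x)
    (hδs : ∀ (x : List Bool) (n : ℕ), n₀ ≤ n → f n ≤ x.length → x.length < f (n + 1) →
      ∀ i : Bool, δ (x ++ [i]) =
        δ (x.take (f n)) / 2 + (δ x - δ (x.take (f n)) / 2) * d (x ++ [i]) / d x) :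
    ((∀ x, 0 ≤ δ x) ∧ ∀ x, δ (x ++ [false]) + δ (x ++ [true]) = 2 * δ x) ∧
      ∀ n m, n₀ ≤ n → f n ≤ m → m < f (n + 1) → (2 : ℝ) ^ n ≤ δ (seg ξ m) := by
  have hδ : IsSavingsAccount d δ f n₀ := ⟨hδ0, hδs⟩
  refine ⟨⟨fun x => hδ.nonneg hpos hf, hδ.martingale hmart (fun x => (hpos x).ne') hf⟩, ?_⟩
  intro n m hn hnm hmn
  have hstart := hδ.div_two_pow_le hpos hf hn (seg_length ξ (f n))
  have hhalf := hδ.half_le hpos hf hn (x := seg ξ m) (by rw [seg_length]; exact hnm)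
    (by rw [seg_length]; exact hmn.le)
  rw [take_seg ξ hnm] at hhalf
  calc (2 : ℝ) ^ n = 2 ^ (2 * n + 1) / 2 ^ n / 2 := by
        field_simp
        ring
    _ ≤ d (seg ξ (f n)) / 2 ^ n / 2 := by gcongr; exact hξ n hn
    _ ≤ δ (seg ξ (f n)) / 2 := by gcongr
    _ ≤ δ (seg ξ m) := hhalf
end

section
/- Let a > 0 and q ∈ (0,1) satisfy c := (1/2)(log₂(1+q) + log₂(1−q)) + a(log₂(1+q) − log₂(1−q)) > 0. If ξ ∈ {0,1}^ℕ satisfies limsup_n sₙ(ξ)/n = 1/2 + a, then for the martingale F defined by F(∅)=1, F(x1)=(1+q)F(x), F(x0)=(1−q)F(x), one has limsup_n (log₂ F(ξ↾n))/n = c; in particular F(ξ↾n) ≥ 2^{cn/2} infinitely often. -/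
/-!
Along `ξ` the martingale is a product, `F(ξ↾n) = (1+q)^{sₙ} (1-q)^{n-sₙ}` with
`sₙ = onesCount ξ n`, so
`log₂ F(ξ↾n) / n = log₂(1-q) + (log₂(1+q) - log₂(1-q)) · sₙ/n` is an increasing affine function
of the frequency `sₙ/n` of ones; such a function commutes with `limsup`, which gives the value `c`.
As `c/2 < c`, the ratio `log₂ F(ξ↾n) / n` exceeds `c/2` infinitely often.
-/

open MeasureTheory

open Filter Real

def onesCount (ξ : ℕ → Bool) (n : ℕ) : ℝ := ∑ k ∈ Finset.range n, if ξ k then (1 : ℝ) else 0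

lemma seg_succ (ξ : ℕ → Bool) (n : ℕ) : seg ξ (n + 1) = seg ξ n ++ [ξ n] := by
  simp [seg, List.range_succ]

lemma onesCount_succ (ξ : ℕ → Bool) (n : ℕ) :
    onesCount ξ (n + 1) = onesCount ξ n + if ξ n then 1 else 0 :=
  Finset.sum_range_succ _ _

lemma onesCount_nonneg (ξ : ℕ → Bool) (n : ℕ) : 0 ≤ onesCount ξ n :=
  Finset.sum_nonneg fun _ _ => by split <;> norm_num

lemma onesCount_le (ξ : ℕ → Bool) (n : ℕ) : onesCount ξ n ≤ n := by
  calc onesCount ξ n ≤ ∑ _ ∈ Finset.range n, (1 : ℝ) :=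
        Finset.sum_le_sum fun _ _ => by split <;> norm_num
    _ = n := by simp

lemma onesCount_div_le_one (ξ : ℕ → Bool) (n : ℕ) : onesCount ξ n / n ≤ 1 :=
  div_le_one_of_le₀ (onesCount_le ξ n) n.cast_nonneg

lemma limsup_const_add_mul {ι : Type*} {l : Filter ι} [NeBot l] {t : ι → ℝ} (α : ℝ) {β : ℝ} (hβ : 0 ≤ β)
    (hbdd : IsBoundedUnder (· ≤ ·) l t) (hcobdd : IsCoboundedUnder (· ≤ ·) l t) :
    limsup (fun i => α + β * t i) l = α + β * limsup t l := by
  have hmono : Monotone fun x : ℝ => α + β * x := fun _ _ h =>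
    add_le_add_right (mul_le_mul_of_nonneg_left h hβ) α
  exact (hmono.map_limsup_of_continuousAt t (by fun_prop) hbdd hcobdd).symm

section BettingAlongSequence

variable {u v : ℝ} {F : List Bool → ℝ}

lemma apply_seg_pos (hu : 0 < u) (hv : 0 < v) (hF0 : F [] = 1)
    (hF1 : ∀ x, F (x ++ [true]) = u * F x) (hF2 : ∀ x, F (x ++ [false]) = v * F x)
    (ξ : ℕ → Bool) (n : ℕ) : 0 < F (seg ξ n) := by
  induction n with
  | zero => simp [seg, hF0]
  | succ n ih =>
    rw [seg_succ]
    cases ξ n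
    · rw [hF2]; positivity
    · rw [hF1]; positivity

lemma logb_apply_seg (b : ℝ) (hu : 0 < u) (hv : 0 < v) (hF0 : F [] = 1)
    (hF1 : ∀ x, F (x ++ [true]) = u * F x) (hF2 : ∀ x, F (x ++ [false]) = v * F x)
    (ξ : ℕ → Bool) (n : ℕ) :
    logb b (F (seg ξ n)) = onesCount ξ n * logb b u + (n - onesCount ξ n) * logb b v := by
  induction n with
  | zero => simp [seg, hF0, onesCount]
  | succ n ih =>
    have hpos := (apply_seg_pos hu hv hF0 hF1 hF2 ξ n).ne'
    rw [seg_succ, onesCount_succ]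
    cases ξ n
    · rw [hF2, logb_mul hv.ne' hpos, ih]; simp only [Bool.false_eq_true, ↓reduceIte]; push_cast; ring
    · rw [hF1, logb_mul hu.ne' hpos, ih]; simp only [↓reduceIte]; push_cast; ring

lemma logb_apply_seg_div (b : ℝ) (hu : 0 < u) (hv : 0 < v) (hF0 : F [] = 1)
    (hF1 : ∀ x, F (x ++ [true]) = u * F x) (hF2 : ∀ x, F (x ++ [false]) = v * F x)
    (ξ : ℕ → Bool) {n : ℕ} (hn : n ≠ 0) :
    logb b (F (seg ξ n)) / n = logb b v + (logb b u - logb b v) * (onesCount ξ n / n) := by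
  rw [logb_apply_seg b hu hv hF0 hF1 hF2]
  field_simp
  ring

lemma limsup_logb_apply_seg_div {b : ℝ} (hb : 1 < b) (hv : 0 < v) (hvu : v ≤ u) (hF0 : F [] = 1)
    (hF1 : ∀ x, F (x ++ [true]) = u * F x) (hF2 : ∀ x, F (x ++ [false]) = v * F x)
    (ξ : ℕ → Bool) :
    limsup (fun n : ℕ => logb b (F (seg ξ n)) / n) atTop =
      logb b v + (logb b u - logb b v) * limsup (fun n : ℕ => onesCount ξ n / n) atTop := by
  have hu := hv.trans_le hvu
  have hrate : ∀ᶠ n : ℕ in atTop, logb b v + (logb b u - logb b v) * (onesCount ξ n / n) =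
      logb b (F (seg ξ n)) / n := by
    filter_upwards [eventually_ne_atTop 0] with n hn
    exact (logb_apply_seg_div b hu hv hF0 hF1 hF2 ξ hn).symm
  rw [← limsup_congr hrate]
  exact limsup_const_add_mul _ (sub_nonneg.2 (logb_le_logb_of_le hb hv hvu))
    (isBoundedUnder_of ⟨1, onesCount_div_le_one ξ⟩)
    (isCoboundedUnder_le_of_le atTop fun n => div_nonneg (onesCount_nonneg ξ n) n.cast_nonneg)

lemma isCoboundedUnder_logb_apply_seg_div {b : ℝ} (hb : 1 < b) (hv : 0 < v) (hvu : v ≤ u)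
    (hF0 : F [] = 1) (hF1 : ∀ x, F (x ++ [true]) = u * F x)
    (hF2 : ∀ x, F (x ++ [false]) = v * F x) (ξ : ℕ → Bool) :
    IsCoboundedUnder (· ≤ ·) atTop fun n : ℕ => logb b (F (seg ξ n)) / n := by
  refine isCoboundedUnder_le_of_eventually_le atTop (x := logb b v) ?_
  filter_upwards [eventually_ne_atTop 0] with n hn
  rw [logb_apply_seg_div b (hv.trans_le hvu) hv hF0 hF1 hF2 ξ hn]
  exact le_add_of_nonneg_right (mul_nonneg (sub_nonneg.2 (logb_le_logb_of_le hb hv hvu))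
    (div_nonneg (onesCount_nonneg ξ n) n.cast_nonneg))

end BettingAlongSequence

lemma exists_rpow_le_of_lt_limsup_logb_div {b : ℝ} (hb : 1 < b) {x : ℕ → ℝ} (hx : ∀ n, 0 < x n)
    {d : ℝ} (hcob : IsCoboundedUnder (· ≤ ·) atTop fun n : ℕ => logb b (x n) / n)
    (hd : d < limsup (fun n : ℕ => logb b (x n) / n) atTop) (N : ℕ) :
    ∃ n, N ≤ n ∧ b ^ (d * n) ≤ x n := by
  obtain ⟨n, hNn, hlt, hn⟩ := frequently_atTop.1
    ((frequently_lt_of_lt_limsup hcob hd).and_eventually (eventually_gt_atTop 0)) N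
  have hn0 : (0 : ℝ) < n := by exact_mod_cast hn
  refine ⟨n, hNn, ?_⟩
  rw [← rpow_logb (by linarith) hb.ne' (hx n)]
  exact rpow_le_rpow_of_exponent_le hb.le ((lt_div_iff₀ hn0).1 hlt).le

theorem stmt18_general (a q c : ℝ) (hq : q ∈ Set.Ioo (0 : ℝ) 1)
    (hc : c = (1 / 2) * (Real.logb 2 (1 + q) + Real.logb 2 (1 - q)) +
      a * (Real.logb 2 (1 + q) - Real.logb 2 (1 - q)))
    (hcpos : 0 < c)
    (ξ : ℕ → Bool)
    (hlim : Filter.limsup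
      (fun n : ℕ => (∑ k ∈ Finset.range n, if ξ k then (1 : ℝ) else 0) / (n : ℝ))
      Filter.atTop = 1 / 2 + a)
    (F : List Bool → ℝ) (hF0 : F [] = 1)
    (hF1 : ∀ x, F (x ++ [true]) = (1 + q) * F x)
    (hF2 : ∀ x, F (x ++ [false]) = (1 - q) * F x) :
    Filter.limsup (fun n : ℕ => Real.logb 2 (F (seg ξ n)) / (n : ℝ)) Filter.atTop = c ∧
      ∀ N : ℕ, ∃ n, N ≤ n ∧ (2 : ℝ) ^ (c * (n : ℝ) / 2) ≤ F (seg ξ n) := by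
  obtain ⟨hq0, hq1⟩ := hq
  have hu : 0 < 1 + q := by linarith
  have hv : 0 < 1 - q := by linarith
  have hfreq : limsup (fun n : ℕ => onesCount ξ n / n) atTop = 1 / 2 + a := hlim
  have hlimsup : limsup (fun n : ℕ => logb 2 (F (seg ξ n)) / n) atTop = c := by
    rw [limsup_logb_apply_seg_div one_lt_two hv (by linarith) hF0 hF1 hF2, hfreq, hc]
    ring
  refine ⟨hlimsup, fun N => ?_⟩
  obtain ⟨n, hNn, hn⟩ := exists_rpow_le_of_lt_limsup_logb_div one_lt_two
    (apply_seg_pos hu hv hF0 hF1 hF2 ξ)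
    (isCoboundedUnder_logb_apply_seg_div one_lt_two hv (by linarith) hF0 hF1 hF2 ξ)
    (by rw [hlimsup]; linarith : c / 2 < _) N
  exact ⟨n, hNn, by rwa [mul_div_right_comm]⟩

/-- If `limsup sₙ(ξ)/n = 1/2 + a` with `a > 0`, and `q ∈ (0,1)` is chosen so that
`c = (1/2)(log₂(1+q)+log₂(1−q)) + a(log₂(1+q)−log₂(1−q)) > 0`, then for the
exponential betting martingale `F`, `limsup (log₂ F(ξ↾n))/n = c`; in particular
`F(ξ↾n) ≥ 2^{cn/2}` infinitely often. -/
theorem stmt18 (a q c : ℝ) (ha : 0 < a) (hq : q ∈ Set.Ioo (0 : ℝ) 1)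
    (hc : c = (1 / 2) * (Real.logb 2 (1 + q) + Real.logb 2 (1 - q)) +
      a * (Real.logb 2 (1 + q) - Real.logb 2 (1 - q)))
    (hcpos : 0 < c)
    (ξ : ℕ → Bool)
    (hlim : Filter.limsup
      (fun n : ℕ => (∑ k ∈ Finset.range n, if ξ k then (1 : ℝ) else 0) / (n : ℝ))
      Filter.atTop = 1 / 2 + a)
    (F : List Bool → ℝ) (hF0 : F [] = 1)
    (hF1 : ∀ x, F (x ++ [true]) = (1 + q) * F x)
    (hF2 : ∀ x, F (x ++ [false]) = (1 - q) * F x) :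
    Filter.limsup (fun n : ℕ => Real.logb 2 (F (seg ξ n)) / (n : ℝ)) Filter.atTop = c ∧
      ∀ N : ℕ, ∃ n, N ≤ n ∧ (2 : ℝ) ^ (c * (n : ℝ) / 2) ≤ F (seg ξ n) :=
  stmt18_general a q c hq hc hcpos ξ hlim F hF0 hF1 hF2
end
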